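/- arXiv:2303.14049 — 7 statements merged into one kernel-verified Lean document; each statement's English description precedes it below -/
import Mathlib

section
/- A monoid (M, m, e) in Set is a group if and only if the associativity square — with (m × id) and (id × m) from M × M × M to M × M, and m from M × M to M — is a pullback square. -/
/-- A monoid `M` in `Set` is a group if and only if the associativity square
(with `m × id` and `id × m` on top/left and `m`, `m` on right/bottom)
is a pullback square. The pullback property in `Set` is spelled out as the
universal property of fibered products on elements. -/
theorem stmt0 (M : Type*) [Monoid M] :
    (∀ a : M, ∃ b : M, a * b = 1 ∧ b * a = 1) ↔
      (∀ u v : M × M, u.1 * u.2 = v.1 * v.2 →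
        ∃! t : M × M × M,
          (t.1 * t.2.1, t.2.2) = u ∧ (t.1, t.2.1 * t.2.2) = v) := by
  constructor
  · intro hinv u v huv
    obtain ⟨w, hw1, hw2⟩ := hinv v.1
    refine ⟨(v.1, w * u.1, u.2), ?_, ?_⟩
    · constructor
      · have : v.1 * (w * u.1) = u.1 := by
          rw [← mul_assoc, hw1, one_mul]
        simp [this]
      · have : (w * u.1) * u.2 = v.2 := by
          rw [mul_assoc, huv, ← mul_assoc, hw2, one_mul]
        simp [this]
    · rintro ⟨a, b, c⟩ ⟨h1, h2⟩
      simp only [Prod.ext_iff] at h1 h2 ⊢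
      obtain ⟨h11, h12⟩ := h1
      obtain ⟨h21, h22⟩ := h2
      refine ⟨h21, ?_, h12⟩
      have : b = w * (a * b) := by rw [← mul_assoc, h21, hw2, one_mul]
      rw [this, h11]
  · intro h a
    obtain ⟨t, ⟨h1, h2⟩, _⟩ := h (1, a) (a, 1) (by simp)
    simp only [Prod.ext_iff] at h1 h2
    exact ⟨t.2.1, by rw [← h2.1, h1.1], by rw [← h1.2, h2.2]⟩
end

section
/- If the associativity square of a monoid M in Set is a pullback, then for all a, g, h, c ∈ M with a·g = h·c, there exists a unique b ∈ M such that g = b·c and h = a·b. -/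
/-- If the associativity square of a monoid `M` in `Set` is a pullback, then
for all `a g h c : M` with `a*g = h*c` there is a unique `b` with `g = b*c`
and `h = a*b`. -/
theorem stmt1 (M : Type*) [Monoid M]
    (hpb : ∀ u v : M × M, u.1 * u.2 = v.1 * v.2 →
      ∃! t : M × M × M,
        (t.1 * t.2.1, t.2.2) = u ∧ (t.1, t.2.1 * t.2.2) = v) :
    ∀ a g h c : M, a * g = h * c → ∃! b : M, g = b * c ∧ h = a * b := by
  intro a g h c hagc
  obtain ⟨t, ⟨ht1, ht2⟩, huniq⟩ := hpb (h, c) (a, g) hagc.symm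
  obtain ⟨hb1, hb2⟩ := Prod.mk.injEq .. ▸ ht1
  obtain ⟨hb3, hb4⟩ := Prod.mk.injEq .. ▸ ht2
  refine ⟨t.2.1, ⟨?_, ?_⟩, ?_⟩
  · rw [← hb4, hb2]
  · rw [← hb1, hb3]
  · intro b ⟨hg, hh⟩
    have := huniq (a, b, c) (by simp [← hh, ← hg])
    rw [← this]
end

section
/- In a weakly Markov category, the action of the group C(X, I) on the hom-set C(X, Y) is free: if a · f = f for some effect a : X → I and morphism f : X → Y, then a = del_X. More generally, if a · f = g then a = (del_Y ∘ f)⁻¹ · (del_Y ∘ g), so a is uniquely determined by f and g. -/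
/-!
Under convolution the effects `X ⟶ I` form a commutative group (associativity from
coassociativity of `copy`, commutativity from its cocommutativity, the unit being `del X`),
and they act on `X ⟶ Y` compatibly with postcomposition. Discarding the output of
`a · f = g` therefore gives `a * (f ≫ del Y) = g ≫ del Y` in that group, which determines `a`.
-/

open CategoryTheory MonoidalCategory

universe v u

/-- A gs-monoidal category: a symmetric monoidal category in which every
object carries a commutative comonoid structure (copy, discard), compatible
with the monoidal structure. -/
class GSMonoidal (C : Type u) [Category.{v} C] [MonoidalCategory C]
    [SymmetricCategory C] where
  copy : ∀ X : C, X ⟶ X ⊗ X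
  del : ∀ X : C, X ⟶ 𝟙_ C
  copy_del_left : ∀ X : C, copy X ≫ (del X ▷ X) ≫ (λ_ X).hom = 𝟙 X
  copy_del_right : ∀ X : C, copy X ≫ (X ◁ del X) ≫ (ρ_ X).hom = 𝟙 X
  copy_assoc : ∀ X : C,
    copy X ≫ (copy X ▷ X) ≫ (α_ X X X).hom = copy X ≫ (X ◁ copy X)
  copy_comm : ∀ X : C, copy X ≫ (β_ X X).hom = copy X
  copy_tensor : ∀ X Y : C,
    copy (X ⊗ Y) = (copy X ⊗ₘ copy Y) ≫ tensorμ X X Y Y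
  del_tensor : ∀ X Y : C, del (X ⊗ Y) = (del X ⊗ₘ del Y) ≫ (λ_ (𝟙_ C)).hom
  copy_unit : copy (𝟙_ C) = (λ_ (𝟙_ C)).inv
  del_unit : del (𝟙_ C) = 𝟙 (𝟙_ C)

namespace GSMonoidal

variable {C : Type u} [Category.{v} C] [MonoidalCategory C]
  [SymmetricCategory C] [GSMonoidal C]

/-- The convolution product on effects `a b : X ⟶ I`:
`(a, b) ↦ copy_X ≫ (a ⊗ b) ≫ (I ⊗ I ≅ I)`. -/
def emul {X : C} (a b : X ⟶ 𝟙_ C) : X ⟶ 𝟙_ C :=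
  copy X ≫ (a ⊗ₘ b) ≫ (λ_ (𝟙_ C)).hom

/-- The action of the effect monoid `C(X, I)` on the hom-set `C(X, Y)`:
`a · f = copy_X ≫ (a ⊗ f) ≫ (λ_ Y)`. -/
def act {X Y : C} (a : X ⟶ 𝟙_ C) (f : X ⟶ Y) : X ⟶ Y :=
  copy X ≫ (a ⊗ₘ f) ≫ (λ_ Y).hom

end GSMonoidal

/-- A weakly Markov category: a gs-monoidal category in which every effect
monoid `C(X, I)` is a group. -/
class WeaklyMarkov (C : Type u) [Category.{v} C] [MonoidalCategory C]
    [SymmetricCategory C] extends GSMonoidal C where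
  einv : ∀ {X : C}, (X ⟶ 𝟙_ C) → (X ⟶ 𝟙_ C)
  emul_einv : ∀ {X : C} (a : X ⟶ 𝟙_ C), GSMonoidal.emul a (einv a) = del X
  einv_emul : ∀ {X : C} (a : X ⟶ 𝟙_ C), GSMonoidal.emul (einv a) a = del X

namespace GSMonoidal

variable {C : Type u} [Category.{v} C] [MonoidalCategory C]
  [SymmetricCategory C] [GSMonoidal C]

lemma act_comp {X Y Z : C} (a : X ⟶ 𝟙_ C) (f : X ⟶ Y) (k : Y ⟶ Z) :
    act a f ≫ k = act a (f ≫ k) := by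
  simp [act, MonoidalCategory.tensorHom_def]

lemma del_act {X Y : C} (f : X ⟶ Y) : act (del X) f = f := by
  simp [act, MonoidalCategory.tensorHom_def, reassoc_of% copy_del_left X]

lemma emul_del {X : C} (a : X ⟶ 𝟙_ C) : emul a (del X) = a := by
  simp [emul, tensorHom_def', reassoc_of% copy_del_right X, unitors_equal]

lemma act_act {X Y : C} (a b : X ⟶ 𝟙_ C) (f : X ⟶ Y) :
    act a (act b f) = act (emul a b) f := by
  calc act a (act b f)
      = copy X ≫ X ◁ copy X ≫ (a ⊗ₘ ((b ⊗ₘ f) ≫ (λ_ Y).hom)) ≫ (λ_ Y).hom := by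
        rw [act, act, ← Category.id_comp a, ← tensorHom_comp_tensorHom, id_tensorHom,
          Category.assoc, Category.id_comp]
    _ = copy X ≫ copy X ▷ X ≫ (α_ X X X).hom ≫ (a ⊗ₘ ((b ⊗ₘ f) ≫ (λ_ Y).hom)) ≫
          (λ_ Y).hom := by
        rw [← reassoc_of% copy_assoc X]
    _ = act (emul a b) f := by
        simp only [act, emul, MonoidalCategory.tensorHom_def, comp_whiskerRight,
          whiskerLeft_comp, Category.assoc]
        monoidal

lemma emul_comm {X : C} (a b : X ⟶ 𝟙_ C) : emul a b = emul b a := by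
  conv_lhs => rw [emul, ← copy_comm X, Category.assoc,
    ← BraidedCategory.braiding_naturality_assoc, braiding_leftUnitor, ← unitors_equal]
  rfl

-- `emul a b` is `act a b` with `Y = I`, so the action laws are the monoid laws.
abbrev effectCommMonoid (X : C) : CommMonoid (X ⟶ 𝟙_ C) where
  mul := emul
  one := del X
  mul_assoc a b c := (act_act a b c).symm
  one_mul := del_act
  mul_one := emul_del
  mul_comm := emul_comm

end GSMonoidal

namespace WeaklyMarkov

variable {C : Type u} [Category.{v} C] [MonoidalCategory C] [SymmetricCategory C]
  [WeaklyMarkov C]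

abbrev effectCommGroup (X : C) : CommGroup (X ⟶ 𝟙_ C) where
  __ := GSMonoidal.effectCommMonoid X
  inv := einv
  inv_mul_cancel := einv_emul

end WeaklyMarkov

open GSMonoidal WeaklyMarkov in
/-- In a weakly Markov category, the action of the group `C(X, I)` on
`C(X, Y)` is free: if `a · f = f` then `a = del_X`; more generally, if
`a · f = g` then `a = (del_Y ∘ f)⁻¹ · (del_Y ∘ g)`, so `a` is uniquely
determined by `f` and `g`. -/
theorem stmt8 {C : Type u} [Category.{v} C] [MonoidalCategory C]
    [SymmetricCategory C] [WeaklyMarkov C] {X Y : C} :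
    (∀ (a : X ⟶ 𝟙_ C) (f : X ⟶ Y), act a f = f → a = del X) ∧
    (∀ (a : X ⟶ 𝟙_ C) (f g : X ⟶ Y), act a f = g →
      a = emul (einv (f ≫ del Y)) (g ≫ del Y)) := by
  let _ := effectCommGroup X
  have act_comp_del (a : X ⟶ 𝟙_ C) (f : X ⟶ Y) : act a f ≫ del Y = a * (f ≫ del Y) :=
    act_comp a f (del Y)
  refine ⟨fun a f h => ?_, fun a f g h => ?_⟩
  · exact mul_eq_right.mp (by rw [← act_comp_del, h])
  · exact eq_inv_mul_of_mul_eq (by rw [mul_comm, ← act_comp_del, h])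
end

section
/- The monoid M*1 ≅ (0, ∞) with multiplication induced by the lax monoidal structure of the nonzero-measure monad M* is the usual multiplication of positive reals and is a group; hence M* is weakly affine. In contrast, M1 ≅ [0,∞) with multiplication is not a group, so the full measure monad M is not weakly affine. -/
open scoped NNReal

/-- `Meas X`: finitely supported measures on `X`. -/
abbrev Meas (X : Type) : Type := X →₀ ℝ≥0

/-- Pushforward of measures. -/
noncomputable def measMap {X Y : Type} (f : X → Y) (m : Meas X) : Meas Y :=
  Finsupp.mapDomain f m

/-- Dirac measure. -/
noncomputable def diracM {X : Type} (x : X) : Meas X := Finsupp.single x 1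

/-- Product measure: `c(m, m')(x, y) = m(x)·m'(y)`. -/
noncomputable def prodMeas {X Y : Type} (m : Meas X) (m' : Meas Y) :
    Meas (X × Y) :=
  m.sum fun x a => m'.sum fun y b => Finsupp.single (x, y) (a * b)

/-- The induced monoid multiplication on `M1 = T1` for the measure monad:
`c_{1,1} : M1 × M1 → M(1 × 1) ≅ M1`, i.e. product measure followed by the
isomorphism `1 × 1 ≅ 1`.  The unit is the Dirac measure `δ_*`. -/
noncomputable def mulOne (m m' : Meas PUnit) : Meas PUnit :=
  measMap (fun _ => PUnit.unit) (prodMeas m m')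

lemma measPUnit_eq (m : Meas PUnit) : m = Finsupp.single PUnit.unit (m PUnit.unit) := by
  apply Finsupp.ext; intro a; cases a; simp

lemma mulOne_single (a b : ℝ≥0) :
    mulOne (Finsupp.single PUnit.unit a) (Finsupp.single PUnit.unit b)
      = Finsupp.single PUnit.unit (a * b) := by
  unfold mulOne prodMeas measMap
  by_cases ha : a = 0
  · simp [ha]
  by_cases hb : b = 0
  · simp [hb]
  rw [Finsupp.sum_single_index (by simp), Finsupp.sum_single_index (by simp),
    Finsupp.mapDomain_single]

lemma mulOne_eq (m m' : Meas PUnit) :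
    mulOne m m' = Finsupp.single PUnit.unit (m PUnit.unit * m' PUnit.unit) := by
  conv_lhs => rw [measPUnit_eq m, measPUnit_eq m']
  exact mulOne_single _ _

/-- The induced multiplication on `M1 ≅ [0,∞)` is the usual multiplication of
reals (multiplication of total masses); restricted to the nonzero measures
`M*1 ≅ (0,∞)` it is a group (so `M*` is weakly affine), while on all of
`M1 ≅ [0,∞)` it is not a group (so `M` is not weakly affine). -/
theorem stmt13 :
    (∀ m m' : Meas PUnit,
      (mulOne m m') PUnit.unit = m PUnit.unit * m' PUnit.unit) ∧
    (∀ m : Meas PUnit, m ≠ 0 →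
      ∃ m' : Meas PUnit, m' ≠ 0 ∧
        mulOne m m' = diracM PUnit.unit ∧ mulOne m' m = diracM PUnit.unit) ∧
    ¬ (∀ m : Meas PUnit, ∃ m' : Meas PUnit,
        mulOne m m' = diracM PUnit.unit) := by
  refine ⟨fun m m' => by rw [mulOne_eq]; simp, ?_, ?_⟩
  · intro m hm
    have hne : m PUnit.unit ≠ 0 := by
      intro h
      apply hm
      rw [measPUnit_eq m, h, Finsupp.single_zero]
    refine ⟨Finsupp.single PUnit.unit (m PUnit.unit)⁻¹, ?_, ?_, ?_⟩
    · simp [Finsupp.single_eq_zero, hne]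
    · rw [mulOne_eq]; simp [mul_inv_cancel₀ hne, diracM]
    · rw [mulOne_eq]; simp [inv_mul_cancel₀ hne, diracM]
  · intro h
    obtain ⟨m', hm'⟩ := h 0
    have := DFunLike.congr_fun hm' PUnit.unit
    rw [mulOne_eq] at this
    simp [diracM] at this
end

section
/- The free abelian group monad F on Set is not weakly affine: F1 ≅ ℤ with the multiplication induced by the lax monoidal structure is the multiplicative monoid of integers, which is not a group. -/
/-- The lax monoidal structure of the free abelian group monad,
`c_{X,Y} : FX × FY → F(X × Y)`, the bilinear extension of `(x, y) ↦ (x, y)`. -/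
def fabLax {X Y : Type} (a : FreeAbelianGroup X) (b : FreeAbelianGroup Y) :
    FreeAbelianGroup (X × Y) :=
  FreeAbelianGroup.lift
    (fun x => FreeAbelianGroup.lift (fun y => FreeAbelianGroup.of (x, y)) b) a

/-- The induced monoid multiplication on `F1`: `c_{1,1}` followed by the
functorial action of the isomorphism `1 × 1 ≅ 1`. -/
def fabMulOne (a b : FreeAbelianGroup PUnit) : FreeAbelianGroup PUnit :=
  FreeAbelianGroup.map (fun _ : PUnit × PUnit => PUnit.unit) (fabLax a b)

/-- The canonical isomorphism `F1 ≅ ℤ`. -/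
def fabToInt : FreeAbelianGroup PUnit →+ ℤ :=
  FreeAbelianGroup.lift (fun _ => (1 : ℤ))

/-!
For a monoid `M`, composing `c_{M,M}` with `F` of the multiplication of `M` is the multiplication
of the group ring `ℤ[M]`. With `M = 1` this makes `F1 ≅ ℤ` a ring isomorphism, and `0` has no
inverse.
-/

open FreeAbelianGroup

theorem map_mul_fabLax {M : Type} [Monoid M] (a b : FreeAbelianGroup M) :
    map (fun p : M × M => p.1 * p.2) (fabLax a b) = a * b := by
  induction a using FreeAbelianGroup.induction_on with
  | zero => simp [fabLax]
  | of x =>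
    induction b using FreeAbelianGroup.induction_on with
    | zero => simp [fabLax]
    | of y => simp [fabLax]
    | neg y ih => simp_all [fabLax]
    | add y z hy hz => simp_all [fabLax, mul_add]
  | neg x ih => simp_all [fabLax]
  | add x y hx hy => simp_all [fabLax, add_mul]

-- `fabMulOne` lands in `FreeAbelianGroup PUnit.{u+1}` for any `u`, hence the transport by `map`.
theorem fabMulOne_eq_map_mul (a b : FreeAbelianGroup PUnit) :
    fabMulOne.{u} a b = map (fun _ => PUnit.unit) (a * b) := by
  rw [← map_mul_fabLax, fabMulOne, ← map_comp_apply]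

theorem fabToInt_map (x : FreeAbelianGroup PUnit.{v + 1}) :
    fabToInt.{u} (map (fun _ => PUnit.unit) x) = fabToInt.{v} x :=
  (lift_comp _ _ x).symm

theorem fabToInt_mul (a b : FreeAbelianGroup PUnit) :
    fabToInt (a * b) = fabToInt a * fabToInt b :=
  map_mul (liftMonoid (1 : PUnit →* ℤ)) a b

/-- The free abelian group monad `F` on `Set` is not weakly affine: under the
isomorphism `F1 ≅ ℤ`, the multiplication induced by the lax monoidal
structure is the multiplicative monoid of integers (with unit `δ_* = of *`),
which is not a group. -/
theorem stmt15 :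
    Function.Bijective fabToInt ∧
    (∀ a b : FreeAbelianGroup PUnit,
      fabToInt (fabMulOne a b) = fabToInt a * fabToInt b) ∧
    ¬ (∀ a : FreeAbelianGroup PUnit, ∃ b : FreeAbelianGroup PUnit,
        fabMulOne a b = FreeAbelianGroup.of PUnit.unit) := by
  refine ⟨(uniqueEquiv PUnit).bijective, fun a b => ?_, fun h => ?_⟩
  · rw [fabMulOne_eq_map_mul, fabToInt_map, fabToInt_mul]
  · obtain ⟨b, hb⟩ := h 0
    rw [fabMulOne_eq_map_mul, zero_mul, map_zero] at hb
    exact zero_ne_of _ hb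
end

section
/- Let T be a commutative monad on a cartesian monoidal category. A Kleisli morphism represented by f♯ : A → T(X₁ × ⋯ × Xₙ) exhibits conditional independence of the Xᵢ given A (i.e., in the Kleisli gs-monoidal category it equals the copy-then-tensor product of some morphisms gᵢ : A → Xᵢ) if and only if f♯ factors as c ∘ (g₁♯, …, gₙ♯) through TX₁ × ⋯ × TXₙ, where c is the iterated lax monoidal structure map. -/
open CategoryTheory CategoryTheory.Limits

universe v u

/-- Let `T` be a commutative monad on a cartesian monoidal category `D`, with
iterated lax monoidal structure map `c : TX₁ ⨯ ⋯ ⨯ TXₙ ⟶ T(X₁ ⨯ ⋯ ⨯ Xₙ)`.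
A Kleisli morphism represented by `f♯ : A ⟶ T(X₁ ⨯ ⋯ ⨯ Xₙ)` exhibits
conditional independence of the `Xᵢ` given `A` — i.e. in the Kleisli
gs-monoidal category it equals the composite of the `n`-fold copy of `A`
(which is the deterministic copy `⟨𝟙,…,𝟙⟩ ≫ η`) with the tensor product of
Kleisli morphisms `gᵢ` (which is `Pi.map gᵢ♯ ≫ c`, Kleisli-composed via
`T.map` and `μ`) — if and only if `f♯` factors as `⟨g₁♯, …, gₙ♯⟩ ≫ c`
through `TX₁ ⨯ ⋯ ⨯ TXₙ`. -/
theorem stmt16 {D : Type u} [Category.{v} D] [HasFiniteProducts D]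
    (T : Monad D) (n : ℕ) (X : Fin n → D) (A : D)
    (c : (∏ᶜ fun i => T.obj (X i)) ⟶ T.obj (∏ᶜ X))
    (f : A ⟶ T.obj (∏ᶜ X)) :
    (∃ g : ∀ i, A ⟶ T.obj (X i),
      f = Pi.lift (fun _ => 𝟙 A) ≫ T.η.app (∏ᶜ fun _ => A) ≫
            T.map (Limits.Pi.map g ≫ c) ≫ T.μ.app (∏ᶜ X)) ↔
    (∃ g : ∀ i, A ⟶ T.obj (X i), f = Pi.lift g ≫ c) := by
  have key : ∀ g : ∀ i, A ⟶ T.obj (X i),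
      Pi.lift (fun _ => 𝟙 A) ≫ T.η.app (∏ᶜ fun _ => A) ≫
        T.map (Limits.Pi.map g ≫ c) ≫ T.μ.app (∏ᶜ X) = Pi.lift g ≫ c := by
    intro g
    rw [← T.η.naturality_assoc, Functor.id_map]
    simp only [Monad.left_unit, Category.comp_id]
    rw [← Category.assoc]
    congr 1
    ext i
    simp
  constructor
  · rintro ⟨g, hf⟩; exact ⟨g, by rw [hf, key]⟩
  · rintro ⟨g, hf⟩; exact ⟨g, by rw [hf, key]⟩
end

section
/- Let T be a commutative monad on a cartesian monoidal category D. Then T is weakly affine (T1 is an internal group) if and only if for all objects X, Y, Z the associativity square with vertices TX × TY × TZ, TX × T(Y × Z), T(X × Y) × TZ, T(X × Y × Z) and maps id × c_{Y,Z}, c_{X,Y} × id, c_{X,Y×Z}, c_{X×Y,Z} is a pullback in D. -/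
open CategoryTheory CategoryTheory.Limits

universe v u

variable {D : Type u} [Category.{v} D] [HasFiniteProducts D]

/-- A commutative (symmetric monoidal) monad on a cartesian monoidal category:
a monad `T` equipped with a lax monoidal structure
`c_{X,Y} : TX ⨯ TY ⟶ T(X ⨯ Y)` which is natural, associative, unital,
symmetric, and compatible with the unit and multiplication of the monad. -/
structure CommMonad (D : Type u) [Category.{v} D] [HasFiniteProducts D] where
  T : Monad D
  c : ∀ X Y : D, T.obj X ⨯ T.obj Y ⟶ T.obj (X ⨯ Y)
  c_natural : ∀ {X X' Y Y' : D} (f : X ⟶ X') (g : Y ⟶ Y'),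
    prod.map (T.map f) (T.map g) ≫ c X' Y' = c X Y ≫ T.map (prod.map f g)
  c_assoc : ∀ X Y Z : D,
    prod.map (𝟙 (T.obj X)) (c Y Z) ≫ c X (Y ⨯ Z) ≫
        T.map (Limits.prod.associator X Y Z).inv =
      (Limits.prod.associator _ _ _).inv ≫ prod.map (c X Y) (𝟙 (T.obj Z)) ≫
        c (X ⨯ Y) Z
  c_unit_right : ∀ X : D,
    prod.lift (𝟙 (T.obj X)) (terminal.from _ ≫ T.η.app (⊤_ D)) ≫
        c X (⊤_ D) ≫ T.map prod.fst = 𝟙 (T.obj X)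
  c_unit_left : ∀ X : D,
    prod.lift (terminal.from _ ≫ T.η.app (⊤_ D)) (𝟙 (T.obj X)) ≫
        c (⊤_ D) X ≫ T.map prod.snd = 𝟙 (T.obj X)
  c_symm : ∀ X Y : D,
    c X Y ≫ T.map (prod.braiding X Y).hom = (prod.braiding _ _).hom ≫ c Y X
  c_eta : ∀ X Y : D,
    prod.map (T.η.app X) (T.η.app Y) ≫ c X Y = T.η.app (X ⨯ Y)
  c_mu : ∀ X Y : D,
    prod.map (T.μ.app X) (T.μ.app Y) ≫ c X Y =
      c (T.obj X) (T.obj Y) ≫ T.map (c X Y) ≫ T.μ.app (X ⨯ Y)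

namespace CommMonad

variable (S : CommMonad D)

/-- The canonical internal monoid multiplication on `T1`:
`c_{1,1} : T1 ⨯ T1 ⟶ T(1 ⨯ 1) ≅ T1`. -/
noncomputable def unitMul : S.T.obj (⊤_ D) ⨯ S.T.obj (⊤_ D) ⟶ S.T.obj (⊤_ D) :=
  S.c (⊤_ D) (⊤_ D) ≫ S.T.map (terminal.from _)

/-- The unit of the internal monoid `T1`, given by the monad unit `η₁`. -/
noncomputable def unitOne : (⊤_ D) ⟶ S.T.obj (⊤_ D) := S.T.η.app (⊤_ D)

/-- `T` is weakly affine if the internal commutative monoid `T1` is an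
internal group, i.e. it admits an inversion morphism. -/
noncomputable def WeaklyAffine : Prop :=
  ∃ ι : S.T.obj (⊤_ D) ⟶ S.T.obj (⊤_ D),
    prod.lift (𝟙 _) ι ≫ S.unitMul = terminal.from _ ≫ S.unitOne ∧
    prod.lift ι (𝟙 _) ≫ S.unitMul = terminal.from _ ≫ S.unitOne

/-- The unit of the effect monoid `Kl_T(X, 1)`: the discard map of the
Kleisli category, `del_X ≫ η₁`. -/
noncomputable def kOne (X : D) : X ⟶ S.T.obj (⊤_ D) :=
  terminal.from X ≫ S.unitOne

/-- The convolution multiplication of the effect monoid `Kl_T(X, 1)`: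
copy, apply both effects, then multiply via `c_{1,1}` and `T(1 ⨯ 1) ≅ T1`. -/
noncomputable def kMul {X : D} (a b : X ⟶ S.T.obj (⊤_ D)) :
    X ⟶ S.T.obj (⊤_ D) :=
  prod.lift a b ≫ S.unitMul

end CommMonad

/-!
Work with generalized elements `A ⟶ TX`. Pairing through `c` lets `T1` act on every `TX`, and a
pair `c(t, u)` projects to `t` acted on by the total mass `T(!) u` of the other factor. When `T1`
is a group this action is invertible, so in a factorisation `c(f, m) = g` the middle component is
forced to be `m = T(π₂) g` acted on by `(T(!) f)⁻¹`; applying projections to the associativity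
equation of a cone shows that this `m` does factor it, which gives the pullback. Conversely, at
`X = Y = Z = 1` the cone `(id, c(1, 1))`, `(c(1, 1), id)` factors through the pullback, and the
middle component of the factorisation is an inverse of the identity of `T1`.
-/

lemma eq_prod_lift_prod_lift {A P Q R : D} (m : A ⟶ P ⨯ (Q ⨯ R)) :
    m = prod.lift (m ≫ prod.fst)
      (prod.lift (m ≫ prod.snd ≫ prod.fst) (m ≫ prod.snd ≫ prod.snd)) := by
  ext <;> simp [prod.lift_fst, prod.lift_snd]

namespace CommMonad

variable (S : CommMonad D) {A X Y Z : D}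

noncomputable def pair (t : A ⟶ S.T.obj X) (u : A ⟶ S.T.obj Y) : A ⟶ S.T.obj (X ⨯ Y) :=
  prod.lift t u ≫ S.c X Y

noncomputable def mass (t : A ⟶ S.T.obj X) : A ⟶ S.T.obj (⊤_ D) :=
  t ≫ S.T.map (terminal.from X)

noncomputable def act (t : A ⟶ S.T.obj X) (s : A ⟶ S.T.obj (⊤_ D)) : A ⟶ S.T.obj X :=
  S.pair t s ≫ S.T.map prod.fst

lemma pair_fst_snd (p : A ⟶ S.T.obj X ⨯ S.T.obj Y) :
    S.pair (p ≫ prod.fst) (p ≫ prod.snd) = p ≫ S.c X Y := by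
  rw [pair, ← prod.comp_lift, prod.lift_fst_snd, Category.comp_id]

lemma pair_map {X' Y' : D} (t : A ⟶ S.T.obj X) (u : A ⟶ S.T.obj Y) (f : X ⟶ X')
    (g : Y ⟶ Y') :
    S.pair t u ≫ S.T.map (prod.map f g) = S.pair (t ≫ S.T.map f) (u ≫ S.T.map g) := by
  rw [pair, pair, Category.assoc, ← S.c_natural, prod.lift_map_assoc]

lemma pair_assoc (t : A ⟶ S.T.obj X) (u : A ⟶ S.T.obj Y) (v : A ⟶ S.T.obj Z) :
    S.pair t (S.pair u v) ≫ S.T.map (Limits.prod.associator X Y Z).inv =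
      S.pair (S.pair t u) v := by
  simpa [pair, prod.comp_lift_assoc, prod.lift_fst, prod.lift_snd, prod.lift_fst_assoc,
    prod.lift_snd_assoc] using prod.lift t (prod.lift u v) ≫= S.c_assoc X Y Z

lemma pair_braiding (t : A ⟶ S.T.obj X) (u : A ⟶ S.T.obj Y) :
    S.pair t u ≫ S.T.map (prod.braiding X Y).hom = S.pair u t := by
  rw [pair, pair, Category.assoc, S.c_symm, ← Category.assoc]
  simp [prod.lift_fst, prod.lift_snd]

lemma pair_map_fst (t : A ⟶ S.T.obj X) (u : A ⟶ S.T.obj Y) :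
    S.pair t u ≫ S.T.map prod.fst = S.act t (S.mass u) := by
  have : (prod.fst : X ⨯ Y ⟶ X) = prod.map (𝟙 X) (terminal.from Y) ≫ prod.fst := by simp
  rw [act, mass, this, S.T.map_comp, ← Category.assoc, pair_map, S.T.map_id,
    Category.comp_id]

lemma pair_map_snd (t : A ⟶ S.T.obj X) (u : A ⟶ S.T.obj Y) :
    S.pair t u ≫ S.T.map prod.snd = S.act u (S.mass t) := by
  have : (prod.snd : X ⨯ Y ⟶ Y) = (prod.braiding X Y).hom ≫ prod.fst := by
    simp [prod.lift_fst]
  rw [this, S.T.map_comp, ← Category.assoc, pair_braiding, pair_map_fst]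

lemma mass_eq_self (s : A ⟶ S.T.obj (⊤_ D)) : S.mass s = s := by
  rw [mass, Subsingleton.elim (terminal.from (⊤_ D)) (𝟙 _), S.T.map_id, Category.comp_id]

lemma mass_pair (t : A ⟶ S.T.obj X) (u : A ⟶ S.T.obj Y) :
    S.mass (S.pair t u) = S.kMul (S.mass t) (S.mass u) := by
  have : terminal.from (X ⨯ Y) =
      prod.map (terminal.from X) (terminal.from Y) ≫ terminal.from _ :=
    Subsingleton.elim _ _
  rw [mass, this, S.T.map_comp, ← Category.assoc, pair_map]
  simp only [pair, kMul, unitMul, mass, Category.assoc]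

lemma act_map {X' : D} (t : A ⟶ S.T.obj X) (s : A ⟶ S.T.obj (⊤_ D)) (f : X ⟶ X') :
    S.act t s ≫ S.T.map f = S.act (t ≫ S.T.map f) s := by
  have : prod.fst ≫ f = prod.map f (𝟙 (⊤_ D)) ≫ prod.fst := by simp
  rw [act, Category.assoc, ← S.T.map_comp, this, S.T.map_comp, ← Category.assoc, pair_map,
    S.T.map_id, Category.comp_id, act]

lemma act_kOne (t : A ⟶ S.T.obj X) : S.act t (S.kOne A) = t := by
  have : prod.lift t (S.kOne A) =
      t ≫ prod.lift (𝟙 _) (terminal.from _ ≫ S.T.η.app (⊤_ D)) := by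
    rw [prod.comp_lift, ← Category.assoc, terminal.comp_from, Category.comp_id]
    rfl
  rw [act, pair, this, Category.assoc, Category.assoc, S.c_unit_right, Category.comp_id]

lemma act_act (t : A ⟶ S.T.obj X) (s s' : A ⟶ S.T.obj (⊤_ D)) :
    S.act (S.act t s) s' = S.act t (S.kMul s s') := by
  have : (Limits.prod.associator X (⊤_ D) (⊤_ D)).inv ≫ prod.fst ≫ prod.fst = prod.fst := by
    simp [prod.lift_fst, prod.lift_fst_assoc]
  calc S.act (S.act t s) s' = S.act (S.pair t s) s' ≫ S.T.map prod.fst := by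
        rw [act_map]; rfl
    _ = S.pair (S.pair t s) s' ≫ S.T.map (prod.fst ≫ prod.fst) := by
        rw [act, Category.assoc, S.T.map_comp]
    _ = S.pair t (S.pair s s') ≫ S.T.map prod.fst := by
        rw [← pair_assoc, Category.assoc, ← S.T.map_comp, this]
    _ = S.act t (S.kMul s s') := by
        rw [pair_map_fst, mass_pair, mass_eq_self, mass_eq_self]

lemma pair_act_right (t : A ⟶ S.T.obj X) (u : A ⟶ S.T.obj Y) (s : A ⟶ S.T.obj (⊤_ D)) :
    S.pair t (S.act u s) = S.act (S.pair t u) s := by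
  have : (Limits.prod.associator X Y (⊤_ D)).inv ≫ prod.fst = prod.map (𝟙 X) prod.fst := by
    ext <;> simp [prod.lift_fst, prod.lift_snd]
  simp only [act]
  rw [← pair_assoc, Category.assoc, ← S.T.map_comp, this, pair_map, S.T.map_id,
    Category.comp_id]

lemma pair_act_left (t : A ⟶ S.T.obj X) (u : A ⟶ S.T.obj Y) (s : A ⟶ S.T.obj (⊤_ D)) :
    S.pair (S.act t s) u = S.act (S.pair t u) s := by
  rw [← pair_braiding, pair_act_right, act_map, pair_braiding]

lemma kMul_eq_act (s s' : A ⟶ S.T.obj (⊤_ D)) : S.kMul s s' = S.act s s' := by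
  simp only [kMul, unitMul, act, pair, Category.assoc]
  rw [Subsingleton.elim (terminal.from ((⊤_ D) ⨯ (⊤_ D))) prod.fst]

lemma pair_kOne (t : A ⟶ S.T.obj X) :
    S.pair t (S.kOne A) = t ≫ S.T.map (prod.rightUnitor X).inv := by
  rw [← S.T.mapIso_inv, Iso.eq_comp_inv]
  exact S.act_kOne t

lemma kOne_pair (t : A ⟶ S.T.obj X) :
    S.pair (S.kOne A) t = t ≫ S.T.map (prod.leftUnitor X).inv := by
  rw [← S.T.mapIso_inv, Iso.eq_comp_inv, Functor.mapIso_hom, prod.leftUnitor_hom, pair_map_snd,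
    mass_eq_self, act_kOne]

section Inverse

variable {ι : S.T.obj (⊤_ D) ⟶ S.T.obj (⊤_ D)}

lemma kMul_comp_inv (hι : S.kMul (𝟙 _) ι = S.kOne _) (s : A ⟶ S.T.obj (⊤_ D)) :
    S.kMul s (s ≫ ι) = S.kOne A := by
  have : S.kMul s (s ≫ ι) = s ≫ S.kMul (𝟙 _) ι := by
    rw [kMul, kMul, ← Category.assoc, prod.comp_lift, Category.comp_id]
  rw [this, hι, kOne, ← Category.assoc, terminal.comp_from]
  rfl

lemma act_act_inv (hι : S.kMul (𝟙 _) ι = S.kOne _) (t : A ⟶ S.T.obj X)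
    (s : A ⟶ S.T.obj (⊤_ D)) : S.act (S.act t s) (s ≫ ι) = t := by
  rw [act_act, S.kMul_comp_inv hι, act_kOne]

lemma pair_right_cancel (hι : S.kMul (𝟙 _) ι = S.kOne _) {t t' : A ⟶ S.T.obj X}
    (u : A ⟶ S.T.obj Y) (h : S.pair t u = S.pair t' u) : t = t' := by
  rw [← S.act_act_inv hι t (S.mass u), ← pair_map_fst, h, pair_map_fst, S.act_act_inv hι]

/-- The unique `m` with `pair f m = g`, when it exists. -/
noncomputable def divLeft (ι : S.T.obj (⊤_ D) ⟶ S.T.obj (⊤_ D)) (f : A ⟶ S.T.obj X)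
    (g : A ⟶ S.T.obj (X ⨯ Y)) : A ⟶ S.T.obj Y :=
  S.act (g ≫ S.T.map prod.snd) (S.mass f ≫ ι)

lemma eq_divLeft (hι : S.kMul (𝟙 _) ι = S.kOne _) {f : A ⟶ S.T.obj X} {m : A ⟶ S.T.obj Y}
    {g : A ⟶ S.T.obj (X ⨯ Y)} (h : S.pair f m = g) : m = S.divLeft ι f g := by
  rw [divLeft, ← h, pair_map_snd, S.act_act_inv hι]

variable {f₁ : A ⟶ S.T.obj X} {f₂₃ : A ⟶ S.T.obj (Y ⨯ Z)}
  {g₁₂ : A ⟶ S.T.obj (X ⨯ Y)} {g₃ : A ⟶ S.T.obj Z}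

lemma pair_divLeft_eq_of_assoc (hι : S.kMul (𝟙 _) ι = S.kOne _)
    (w : S.pair f₁ f₂₃ ≫ S.T.map (Limits.prod.associator X Y Z).inv = S.pair g₁₂ g₃) :
    S.pair (S.divLeft ι f₁ g₁₂) g₃ = f₂₃ := by
  have : (prod.snd : X ⨯ (Y ⨯ Z) ⟶ Y ⨯ Z) =
      (Limits.prod.associator X Y Z).inv ≫ prod.map prod.snd (𝟙 Z) := by
    ext <;> simp [prod.lift_fst, prod.lift_snd]
  calc S.pair (S.divLeft ι f₁ g₁₂) g₃
      = S.act (S.pair (g₁₂ ≫ S.T.map prod.snd) g₃) (S.mass f₁ ≫ ι) := pair_act_left ..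
    _ = S.act (S.act f₂₃ (S.mass f₁)) (S.mass f₁ ≫ ι) := by
        rw [← pair_map_snd, this, S.T.map_comp, reassoc_of% w, pair_map, S.T.map_id,
          Category.comp_id]
    _ = f₂₃ := S.act_act_inv hι _ _

lemma pair_self_divLeft_of_assoc (hι : S.kMul (𝟙 _) ι = S.kOne _)
    (w : S.pair f₁ f₂₃ ≫ S.T.map (Limits.prod.associator X Y Z).inv = S.pair g₁₂ g₃) :
    S.pair f₁ (S.divLeft ι f₁ g₁₂) = g₁₂ :=
  S.pair_right_cancel hι g₃ (by rw [← pair_assoc, S.pair_divLeft_eq_of_assoc hι w, w])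

end Inverse

lemma lift_lift_comp_map_c (a : A ⟶ S.T.obj X) (b : A ⟶ S.T.obj Y) (d : A ⟶ S.T.obj Z) :
    prod.lift a (prod.lift b d) ≫ prod.map (𝟙 _) (S.c Y Z) = prod.lift a (S.pair b d) := by
  rw [prod.lift_map, Category.comp_id, pair]

lemma lift_lift_comp_assoc_map_c (a : A ⟶ S.T.obj X) (b : A ⟶ S.T.obj Y)
    (d : A ⟶ S.T.obj Z) :
    prod.lift a (prod.lift b d) ≫ (Limits.prod.associator _ _ _).inv ≫
        prod.map (S.c X Y) (𝟙 _) =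
      prod.lift (S.pair a b) d := by
  ext <;> simp [pair, prod.comp_lift_assoc, prod.lift_fst, prod.lift_snd, prod.lift_snd_assoc]

theorem isPullback_of_kMul_inv {ι : S.T.obj (⊤_ D) ⟶ S.T.obj (⊤_ D)}
    (hι : S.kMul (𝟙 _) ι = S.kOne _) (X Y Z : D) :
    IsPullback (prod.map (𝟙 (S.T.obj X)) (S.c Y Z))
      ((Limits.prod.associator _ _ _).inv ≫ prod.map (S.c X Y) (𝟙 (S.T.obj Z)))
      (S.c X (Y ⨯ Z) ≫ S.T.map (Limits.prod.associator X Y Z).inv) (S.c (X ⨯ Y) Z) := by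
  have cond (s : PullbackCone (S.c X (Y ⨯ Z) ≫ S.T.map (Limits.prod.associator X Y Z).inv)
      (S.c (X ⨯ Y) Z)) : S.pair (s.fst ≫ prod.fst) (s.fst ≫ prod.snd) ≫
      S.T.map (Limits.prod.associator X Y Z).inv =
        S.pair (s.snd ≫ prod.fst) (s.snd ≫ prod.snd) := by
    rw [pair_fst_snd, pair_fst_snd, Category.assoc, s.condition]
  refine IsPullback.of_isLimit' ⟨by simpa only [Category.assoc] using S.c_assoc X Y Z⟩
    (PullbackCone.IsLimit.mk _ (fun s => prod.lift (s.fst ≫ prod.fst)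
      (prod.lift (S.divLeft ι (s.fst ≫ prod.fst) (s.snd ≫ prod.fst)) (s.snd ≫ prod.snd)))
    (fun s => ?_) (fun s => ?_) (fun s m h₁ h₂ => ?_))
  · rw [lift_lift_comp_map_c, S.pair_divLeft_eq_of_assoc hι (cond s)]
    ext <;> simp [prod.lift_fst, prod.lift_snd]
  · rw [lift_lift_comp_assoc_map_c, S.pair_self_divLeft_of_assoc hι (cond s)]
    ext <;> simp [prod.lift_fst, prod.lift_snd]
  · rw [eq_prod_lift_prod_lift m, lift_lift_comp_map_c] at h₁
    rw [eq_prod_lift_prod_lift m, lift_lift_comp_assoc_map_c] at h₂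
    rw [eq_prod_lift_prod_lift m, ← h₁, ← h₂]
    simp only [prod.lift_fst, prod.lift_snd]
    rw [← S.eq_divLeft hι rfl]

lemma pair_id_pair_kOne_kOne :
    S.pair (𝟙 _) (S.pair (S.kOne (S.T.obj (⊤_ D))) (S.kOne _)) ≫
        S.T.map (Limits.prod.associator (⊤_ D) (⊤_ D) (⊤_ D)).inv =
      S.pair (S.pair (S.kOne _) (S.kOne _)) (𝟙 _) := by
  rw [pair_assoc, ← S.pair_assoc _ _ (𝟙 _), pair_kOne, pair_kOne, kOne_pair, kOne_pair]
  simp only [Category.id_comp, Category.assoc, ← S.T.map_comp]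
  congr 1
  ext

theorem weaklyAffine_of_isPullback
    (h : IsPullback (prod.map (𝟙 (S.T.obj (⊤_ D))) (S.c (⊤_ D) (⊤_ D)))
      ((Limits.prod.associator _ _ _).inv ≫
        prod.map (S.c (⊤_ D) (⊤_ D)) (𝟙 (S.T.obj (⊤_ D))))
      (S.c (⊤_ D) ((⊤_ D) ⨯ (⊤_ D)) ≫
        S.T.map (Limits.prod.associator (⊤_ D) (⊤_ D) (⊤_ D)).inv)
      (S.c ((⊤_ D) ⨯ (⊤_ D)) (⊤_ D))) :
    S.WeaklyAffine := by
  set one := S.kOne (S.T.obj (⊤_ D))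
  obtain ⟨k, hk₁, hk₂⟩ := h.exists_lift (prod.lift (𝟙 _) (S.pair one one))
    (prod.lift (S.pair one one) (𝟙 _))
    (by rw [← Category.assoc]; exact S.pair_id_pair_kOne_kOne)
  rw [eq_prod_lift_prod_lift k, lift_lift_comp_map_c] at hk₁
  rw [eq_prod_lift_prod_lift k, lift_lift_comp_assoc_map_c] at hk₂
  set ι := k ≫ prod.snd ≫ prod.fst
  have hfst : k ≫ prod.fst = 𝟙 _ := by simpa [prod.lift_fst] using hk₁ =≫ prod.fst
  have hsnd : k ≫ prod.snd ≫ prod.snd = 𝟙 _ := by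
    simpa [prod.lift_snd] using hk₂ =≫ prod.snd
  have hleft : S.pair (𝟙 _) ι = S.pair one one := by
    simpa [hfst, prod.lift_fst] using hk₂ =≫ prod.fst
  have hright : S.pair ι (𝟙 _) = S.pair one one := by
    simpa [hsnd, prod.lift_snd] using hk₁ =≫ prod.snd
  have hone : S.mass (S.pair one one) = one := by
    rw [mass_pair, mass_eq_self, kMul_eq_act, act_kOne]
  refine ⟨ι, ?_, ?_⟩
  · change S.kMul (𝟙 _) ι = one
    rw [← hone, ← hleft, mass_pair, mass_eq_self, mass_eq_self]
  · change S.kMul ι (𝟙 _) = one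
    rw [← hone, ← hright, mass_pair, mass_eq_self, mass_eq_self]

end CommMonad

/-- Main theorem: a commutative monad `T` on a cartesian monoidal category is
weakly affine (`T1` is an internal group) if and only if for all objects
`X, Y, Z` the associativity square
`TX ⨯ TY ⨯ TZ → TX ⨯ T(Y ⨯ Z), T(X ⨯ Y) ⨯ TZ → T(X ⨯ Y ⨯ Z)`
with maps `id ⨯ c_{Y,Z}`, `c_{X,Y} ⨯ id`, `c_{X,Y⨯Z}`, `c_{X⨯Y,Z}` is a
pullback in `D`. -/
theorem stmt19 {D : Type u} [Category.{v} D] [HasFiniteProducts D]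
    (S : CommMonad D) :
    S.WeaklyAffine ↔
    (∀ X Y Z : D,
      IsPullback
        (prod.map (𝟙 (S.T.obj X)) (S.c Y Z))
        ((Limits.prod.associator _ _ _).inv ≫
          prod.map (S.c X Y) (𝟙 (S.T.obj Z)))
        (S.c X (Y ⨯ Z) ≫ S.T.map (Limits.prod.associator X Y Z).inv)
        (S.c (X ⨯ Y) Z)) := by
  constructor
  · rintro ⟨ι, hι, -⟩ X Y Z
    exact S.isPullback_of_kMul_inv hι X Y Z
  · intro h
    exact S.weaklyAffine_of_isPullback (h _ _ _)
end
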